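/- arXiv:1405.1894 — 6 statements merged into one kernel-verified Lean document; each statement's English description precedes it below -/
import Mathlib

section
/- Given a finite set P of b points on the real line, all contained in an interval [ℓ, r] of length w = r − ℓ > 2, there exists a point p in the open interval (ℓ+1, r−1) such that at most 2b/(w−2) points of P lie within distance 1 of p. -/
/-!
Place a comb of `N = ⌈(w - 2) / 2⌉` centres `x, x + 2, …, x + 2(N - 1)` inside `(ℓ + 1, r - 1)`.
Two windows `[p - 1, p + 1]` of centres at distance at least `2` can only share their common
endpoint, so shifting the comb generically makes all `N` windows disjoint. By pigeonhole one of
them meets at most `b / N ≤ 2b / (w - 2)` points of `P`.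
-/

open Finset

theorem Finset.exists_mul_card_le_card_of_pairwiseDisjoint {α ι : Type*} [DecidableEq α]
    {P : Finset α} {s : Finset ι} (hs : s.Nonempty) {S : ι → Finset α}
    (hSP : ∀ i ∈ s, S i ⊆ P) (hS : (s : Set ι).PairwiseDisjoint S) :
    ∃ i ∈ s, #s * #(S i) ≤ #P := by
  have hsum : ∑ i ∈ s, #(S i) ≤ #P := by
    rw [← card_biUnion hS]
    exact card_le_card (biUnion_subset.2 hSP)
  apply exists_le_of_sum_le hs
  rw [← mul_sum, sum_const, smul_eq_mul]
  exact Nat.mul_le_mul_left _ hsum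

theorem disjoint_filter_abs_sub_le_one {P : Finset ℝ} {p p' : ℝ} (h : 2 ≤ |p - p'|)
    (hP : (p + p') / 2 ∉ P) :
    Disjoint (P.filter fun q => |q - p| ≤ 1) (P.filter fun q => |q - p'| ≤ 1) := by
  rw [disjoint_filter]
  intro q hq hqp hqp'
  have hmid : q = (p + p') / 2 := by
    rw [abs_le] at hqp hqp'
    rcases le_abs'.1 h with h | h <;> linarith
  exact hP (hmid ▸ hq)

theorem exists_mem_Ioo_forall_add_natCast_notMem (P : Finset ℝ) (M : ℕ) {a c : ℝ} (hac : a < c) :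
    ∃ x ∈ Set.Ioo a c, ∀ k < M, x + k ∉ P := by
  obtain ⟨x, hx, hxB⟩ := (Set.Ioo_infinite hac).exists_notMem_finset
    ((P ×ˢ range M).image fun qk => qk.1 - qk.2)
  refine ⟨x, hx, fun k hk hxk => hxB (mem_image.2 ⟨(x + k, k), ?_, by ring⟩)⟩
  simp [hxk, hk]

theorem pairwiseDisjoint_filter_abs_sub_le_one_comb {P : Finset ℝ} {x : ℝ} {N : ℕ}
    (hx : ∀ k < 2 * N, x + k ∉ P) :
    (range N : Set ℕ).PairwiseDisjoint
      fun i => P.filter fun q => |q - (x + 2 * i)| ≤ 1 := by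
  intro i hi j hj hij
  apply disjoint_filter_abs_sub_le_one
  · rw [le_abs']
    rcases hij.lt_or_gt with h | h
    · left
      have : (i : ℝ) + 1 ≤ j := by exact_mod_cast h
      linarith
    · right
      have : (j : ℝ) + 1 ≤ i := by exact_mod_cast h
      linarith
  · have hk := hx (i + j) (by simp only [coe_range, Set.mem_Iio] at hi hj; omega)
    rwa [show (x + 2 * i + (x + 2 * j)) / 2 = x + ((i + j : ℕ) : ℝ) by push_cast; ring]

open Classical in
theorem stmt_0_general (P : Finset ℝ) (b : ℕ) (ℓ r : ℝ)
    (hcard : P.card = b) (hw : r - ℓ > 2) :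
    ∃ p ∈ Set.Ioo (ℓ + 1) (r - 1),
      ((P.filter (fun q => |q - p| ≤ 1)).card : ℝ) ≤ 2 * b / (r - ℓ - 2) := by
  set N := ⌈(r - ℓ - 2) / 2⌉₊
  have hN_ge : (r - ℓ - 2) / 2 ≤ N := Nat.le_ceil _
  have hN_lt : (N : ℝ) < (r - ℓ - 2) / 2 + 1 := Nat.ceil_lt_add_one (by linarith)
  have hN : 0 < N := Nat.ceil_pos.2 (by linarith)
  obtain ⟨x, ⟨hx₁, hx₂⟩, hx⟩ :=
    exists_mem_Ioo_forall_add_natCast_notMem P (2 * N) (a := ℓ + 1) (c := r - 1 - 2 * (N - 1))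
      (by linarith)
  obtain ⟨i, hi, hPi⟩ := exists_mul_card_le_card_of_pairwiseDisjoint (nonempty_range_iff.2 hN.ne')
    (fun _ _ => filter_subset _ P) (pairwiseDisjoint_filter_abs_sub_le_one_comb hx)
  have hi' : (i : ℝ) + 1 ≤ N := by exact_mod_cast mem_range.1 hi
  refine ⟨x + 2 * i, ⟨by linarith [(Nat.cast_nonneg i : (0 : ℝ) ≤ i)], by linarith⟩, ?_⟩
  rw [card_range, hcard] at hPi
  set c := #(P.filter fun q => |q - (x + 2 * i)| ≤ 1)
  have hNc : (N : ℝ) * c ≤ b := by exact_mod_cast hPi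
  rw [le_div_iff₀ (by linarith)]
  calc (c : ℝ) * (r - ℓ - 2) ≤ c * (2 * N) := by gcongr; linarith
    _ ≤ 2 * b := by linarith

open Classical in
theorem stmt_0 (P : Finset ℝ) (b : ℕ) (ℓ r : ℝ)
    (hcard : P.card = b) (hsub : ∀ q ∈ P, q ∈ Set.Icc ℓ r) (hw : r - ℓ > 2) :
    ∃ p ∈ Set.Ioo (ℓ + 1) (r - 1),
      ((P.filter (fun q => |q - p| ≤ 1)).card : ℝ) ≤ 2 * b / (r - ℓ - 2) :=
  stmt_0_general P b ℓ r hcard hw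
end

section
/- Let v₁, …, v_d be linearly independent unit vectors in ℝ^d and H₁, …, H_d hyperplanes with normal vectors v₁, …, v_d respectively. Then the number of pairwise disjoint unit balls each entirely contained within distance wᵢ of Hᵢ for all i is at most (2^d · w₁⋯w_d) / (|det(v₁,…,v_d)| · V_d), where V_d is the volume of the d-dimensional unit ball. -/
/-!
The linear map `x ↦ (⟪x, v i⟫)ᵢ` has determinant `det (v₁, …, v_d)` and carries the region
within `wᵢ` of every `Hᵢ` onto a box of volume `2^d ∏ wᵢ`, so that region has volume
`2^d ∏ wᵢ / |det (v₁, …, v_d)|`. The `N` disjoint unit balls inside it fill volume `N V_d`.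
-/

open MeasureTheory Function
open scoped ENNReal RealInnerProductSpace

theorem card_mul_le_measure_of_pairwise_disjoint {α ι : Type*} [MeasurableSpace α] [Fintype ι]
    (μ : Measure α) {s : ι → Set α} {S : Set α} {m : ℝ≥0∞}
    (hs : ∀ i, MeasurableSet (s i)) (hd : Pairwise (Disjoint on s)) (hm : ∀ i, μ (s i) = m)
    (hS : ∀ i, s i ⊆ S) : (Fintype.card ι : ℝ≥0∞) * m ≤ μ S :=
  calc (Fintype.card ι : ℝ≥0∞) * m = ∑ i, μ (s i) := by simp [hm]
    _ = μ (⋃ i, s i) := ((measure_iUnion hd hs).trans (tsum_fintype _)).symm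
    _ ≤ μ S := measure_mono (Set.iUnion_subset hS)

section Slab

variable {ι : Type*} [Fintype ι] [DecidableEq ι]

theorem toLpLin_of_apply (v : ι → EuclideanSpace ℝ ι) (x : EuclideanSpace ℝ ι) (i : ι) :
    Matrix.toLpLin 2 2 (Matrix.of fun i j => v i j : Matrix ι ι ℝ) x i = ⟪x, v i⟫ := by
  simp [Matrix.toLpLin_apply, Matrix.mulVec, dotProduct, PiLp.inner_apply, mul_comm]

theorem det_ne_zero_of_linearIndependent {v : ι → EuclideanSpace ℝ ι}
    (hv : LinearIndependent ℝ v) : (Matrix.of fun i j => v j i).det ≠ 0 := by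
  rw [← isUnit_iff_ne_zero, ← Matrix.isUnit_iff_isUnit_det,
    ← Matrix.linearIndependent_cols_iff_isUnit]
  exact hv.map' _ (WithLp.linearEquiv 2 ℝ (ι → ℝ)).ker

theorem volume_setOf_inner_mem_Icc {v : ι → EuclideanSpace ℝ ι} (hv : LinearIndependent ℝ v)
    (a b : ι → ℝ) :
    volume {x : EuclideanSpace ℝ ι | ∀ i, ⟪x, v i⟫ ∈ Set.Icc (a i) (b i)} =
      ENNReal.ofReal |(Matrix.of fun i j => v j i).det|⁻¹ * ∏ i, ENNReal.ofReal (b i - a i) := by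
  have hT : LinearMap.det (Matrix.toLpLin 2 2 (Matrix.of fun i j => v i j : Matrix ι ι ℝ)) =
      (Matrix.of fun i j => v j i).det := by
    rw [Matrix.toLpLin_eq_toLin, LinearMap.det_toLin, ← Matrix.det_transpose]
    rfl
  set T := Matrix.toLpLin 2 2 (Matrix.of fun i j => v i j : Matrix ι ι ℝ)
  have hslab : {x : EuclideanSpace ℝ ι | ∀ i, ⟪x, v i⟫ ∈ Set.Icc (a i) (b i)} =
      T ⁻¹' (WithLp.ofLp ⁻¹' Set.univ.pi fun i => Set.Icc (a i) (b i)) := by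
    ext x
    simp only [Set.mem_ofPred_eq, Set.mem_preimage, Set.mem_univ_pi, T, ← toLpLin_of_apply]
  rw [hslab, Measure.addHaar_preimage_linearMap _ (hT ▸ det_ne_zero_of_linearIndependent hv),
    hT, abs_inv, (PiLp.volume_preserving_ofLp ι).measure_preimage
      (MeasurableSet.univ_pi fun _ => measurableSet_Icc).nullMeasurableSet,
    volume_pi_pi]
  simp only [Real.volume_Icc]

theorem volume_setOf_abs_inner_sub_le {v : ι → EuclideanSpace ℝ ι} (hv : LinearIndependent ℝ v)
    (c : ι → ℝ) {w : ι → ℝ} (hw : ∀ i, 0 ≤ w i) :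
    volume {x : EuclideanSpace ℝ ι | ∀ i, |⟪x, v i⟫ - c i| ≤ w i} =
      ENNReal.ofReal (2 ^ Fintype.card ι * (∏ i, w i) / |(Matrix.of fun i j => v j i).det|) := by
  have hslab : {x : EuclideanSpace ℝ ι | ∀ i, |⟪x, v i⟫ - c i| ≤ w i} =
      {x | ∀ i, ⟪x, v i⟫ ∈ Set.Icc (c i - w i) (c i + w i)} := by
    ext x
    exact forall_congr' fun i => by rw [abs_sub_comm, Set.mem_Icc_iff_abs_le]
  have hwidth : ∀ i, c i + w i - (c i - w i) = 2 * w i := fun i => by ring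
  rw [hslab, volume_setOf_inner_mem_Icc hv, Finset.prod_congr rfl fun i _ => congrArg _ (hwidth i),
    ← ENNReal.ofReal_prod_of_nonneg fun i _ => by linarith [hw i],
    ← ENNReal.ofReal_mul (by positivity), Finset.prod_mul_distrib, Finset.prod_const,
    Finset.card_univ, div_eq_inv_mul]

end Slab

open MeasureTheory in
theorem stmt_2_general (d : ℕ)
    (v : Fin d → EuclideanSpace ℝ (Fin d))
    (hli : LinearIndependent ℝ v)
    (c : Fin d → ℝ) (w : Fin d → ℝ) (hw : ∀ i, 0 < w i)
    (N : ℕ) (p : Fin N → EuclideanSpace ℝ (Fin d))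
    (hdisj : ∀ a b : Fin N, a ≠ b →
      Disjoint (Metric.closedBall (p a) 1) (Metric.closedBall (p b) 1))
    (hnear : ∀ a : Fin N, ∀ i : Fin d, ∀ x ∈ Metric.closedBall (p a) 1,
      |inner ℝ x (v i) - c i| ≤ w i) :
    (N : ℝ) ≤ 2 ^ d * (∏ i, w i) /
      (|(Matrix.of (fun i j : Fin d => v j i)).det| *
        (volume (Metric.closedBall (0 : EuclideanSpace ℝ (Fin d)) 1)).toReal) := by
  have hcount := card_mul_le_measure_of_pairwise_disjoint volume
    (S := {x | ∀ i, |⟪x, v i⟫ - c i| ≤ w i}) (fun a => measurableSet_closedBall) hdisj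
    (fun a => Measure.addHaar_closedBall_center volume (p a) 1) (fun a x hx i => hnear a i x hx)
  rw [volume_setOf_abs_inner_sub_le hli c fun i => (hw i).le, Fintype.card_fin,
    Fintype.card_fin] at hcount
  have hV : 0 < (volume (Metric.closedBall (0 : EuclideanSpace ℝ (Fin d)) 1)).toReal :=
    ENNReal.toReal_pos (Metric.measure_closedBall_pos volume 0 one_pos).ne'
      measure_closedBall_lt_top.ne
  rw [← div_div, le_div_iff₀ hV]
  simpa only [ENNReal.toReal_mul, ENNReal.toReal_natCast] using
    ENNReal.toReal_le_of_le_ofReal (div_nonneg (mul_nonneg (by positivity)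
      (Finset.prod_nonneg fun i _ => (hw i).le)) (abs_nonneg _)) hcount

open MeasureTheory in
theorem stmt_2 (d : ℕ) (hd : 1 ≤ d)
    (v : Fin d → EuclideanSpace ℝ (Fin d))
    (hunit : ∀ i, ‖v i‖ = 1) (hli : LinearIndependent ℝ v)
    (c : Fin d → ℝ) (w : Fin d → ℝ) (hw : ∀ i, 0 < w i)
    (N : ℕ) (p : Fin N → EuclideanSpace ℝ (Fin d))
    (hdisj : ∀ a b : Fin N, a ≠ b →
      Disjoint (Metric.closedBall (p a) 1) (Metric.closedBall (p b) 1))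
    (hnear : ∀ a : Fin N, ∀ i : Fin d, ∀ x ∈ Metric.closedBall (p a) 1,
      |inner ℝ x (v i) - c i| ≤ w i) :
    (N : ℝ) ≤ 2 ^ d * (∏ i, w i) /
      (|(Matrix.of (fun i j : Fin d => v j i)).det| *
        (volume (Metric.closedBall (0 : EuclideanSpace ℝ (Fin d)) 1)).toReal) :=
  stmt_2_general d v hli c w hw N p hdisj hnear
end

section
/- Let k be a prime and define p_i = (1/k)·(i, i² mod k, …, i^d mod k) ∈ [0,1]^d for i = 0,…,k−1. Then any d+1 of these points span a d-simplex of volume at least 1/(d!·k^d). -/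
/-!
Scaling by `k` turns the edge matrix of the simplex into an integer matrix `A`. Modulo `k` its
entries are `x_j ^ r - x_0 ^ r` with `x_i = idx i` distinct in the field `ZMod k`, so `det A` reduces
to the Vandermonde determinant of the `x_i`, which is nonzero. Hence `det A` is a nonzero integer
and the real determinant, `det A / k ^ d`, is at least `1 / k ^ d` in absolute value.
-/

open Matrix

theorem Matrix.det_pow_sub_pow_eq_det_vandermonde {R : Type*} [CommRing R] {n : ℕ}
    (x : Fin (n + 1) → R) :
    (of fun r j : Fin n => x j.succ ^ ((r : ℕ) + 1) - x 0 ^ ((r : ℕ) + 1)).det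
      = (vandermonde x).det := by
  set B : Matrix (Fin (n + 1)) (Fin (n + 1)) R :=
    of fun i j => Fin.cases (x 0 ^ (j : ℕ)) (fun i => x i.succ ^ (j : ℕ) - x 0 ^ (j : ℕ)) i
  have hB : (vandermonde x).det = B.det := by
    refine (det_eq_of_forall_row_eq_smul_add_const (Fin.cons 0 fun _ => -1) 0 rfl ?_).symm
    intro i j
    cases i using Fin.cases <;> simp [B, vandermonde_apply, sub_eq_add_neg]
  rw [hB, det_succ_column_zero, Fin.sum_univ_succ]
  simp only [Fin.coe_ofNat_eq_mod, Nat.zero_mod, pow_zero, of_apply, sub_self, Fin.cases_zero,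
    mul_one, Fin.succAbove_zero, one_mul, Fin.cases_succ, mul_zero, zero_mul,
    Finset.sum_const_zero, add_zero, B]
  rw [← det_transpose]
  rfl

theorem one_div_pow_le_abs_det_smul_map_intCast {n : Type*} [Fintype n] [DecidableEq n]
    (A : Matrix n n ℤ) (hA : A.det ≠ 0) {c : ℝ} (hc : 0 < c) :
    1 / c ^ Fintype.card n ≤ |(c⁻¹ • A.map (Int.cast : ℤ → ℝ)).det| := by
  have hmap : (A.map (Int.cast : ℤ → ℝ)).det = A.det := ((Int.castRingHom ℝ).map_det A).symm
  have hA1 : (1 : ℝ) ≤ |(A.det : ℝ)| := by exact_mod_cast Int.one_le_abs hA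
  rw [det_smul, hmap, abs_mul, abs_pow, abs_inv, abs_of_pos hc, inv_pow, one_div]
  exact le_mul_of_one_le_right (by positivity) hA1

theorem stmt_4_general (k : ℕ) (hk : k.Prime) (d : ℕ)
    (p : Fin k → Fin d → ℝ)
    (hp : ∀ i : Fin k, ∀ j : Fin d, p i j = ((i : ℕ) ^ ((j : ℕ) + 1) % k : ℕ) / (k : ℝ))
    (idx : Fin (d + 1) → Fin k) (hinj : Function.Injective idx) :
    (1 : ℝ) / (Nat.factorial d * (k : ℝ) ^ d) ≤
      |(Matrix.of (fun r j : Fin d => p (idx j.succ) r - p (idx 0) r)).det|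
        / Nat.factorial d := by
  have : Fact k.Prime := ⟨hk⟩
  set A : Matrix (Fin d) (Fin d) ℤ := of fun r j =>
    (((idx j.succ : ℕ) ^ ((r : ℕ) + 1) % k : ℕ) : ℤ) - (((idx 0 : ℕ) ^ ((r : ℕ) + 1) % k : ℕ) : ℤ)
  have hscale : of (fun r j : Fin d => p (idx j.succ) r - p (idx 0) r)
      = (k : ℝ)⁻¹ • A.map (Int.cast : ℤ → ℝ) := by
    ext r j
    simp only [A, of_apply, hp, Matrix.smul_apply, map_apply, smul_eq_mul, Int.cast_sub,
      Int.cast_natCast]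
    ring
  set y : Fin (d + 1) → ZMod k := fun t => ((idx t : ℕ) : ZMod k)
  have hy : Function.Injective y := fun s t h =>
    hinj (Fin.ext (by
      simpa [Nat.mod_eq_of_lt (idx s).isLt, Nat.mod_eq_of_lt (idx t).isLt]
        using (ZMod.natCast_eq_natCast_iff' _ _ _).1 h))
  have hmod : A.map (Int.castRingHom (ZMod k))
      = of fun r j : Fin d => y j.succ ^ ((r : ℕ) + 1) - y 0 ^ ((r : ℕ) + 1) := by
    ext r j
    simp [A, y]
  have hdet : A.det ≠ 0 := by
    intro h
    have := (Int.castRingHom (ZMod k)).map_det A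
    rw [h, map_zero, RingHom.mapMatrix_apply, hmod, det_pow_sub_pow_eq_det_vandermonde] at this
    exact det_vandermonde_ne_zero_iff.2 hy this.symm
  rw [hscale, mul_comm, ← div_div]
  gcongr
  simpa only [Fintype.card_fin] using
    one_div_pow_le_abs_det_smul_map_intCast A hdet (by exact_mod_cast hk.pos : (0 : ℝ) < k)

theorem stmt_4 (k : ℕ) (hk : k.Prime) (d : ℕ) (hd : 1 ≤ d)
    (p : Fin k → Fin d → ℝ)
    (hp : ∀ i : Fin k, ∀ j : Fin d, p i j = ((i : ℕ) ^ ((j : ℕ) + 1) % k : ℕ) / (k : ℝ))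
    (idx : Fin (d + 1) → Fin k) (hinj : Function.Injective idx) :
    (1 : ℝ) / (Nat.factorial d * (k : ℝ) ^ d) ≤
      |(Matrix.of (fun r j : Fin d => p (idx j.succ) r - p (idx 0) r)).det|
        / Nat.factorial d :=
  stmt_4_general k hk d p hp idx hinj
end

section
/- Let k be prime and p_i = (1/k)·(i, i² mod k, …, i^d mod k). Then any d+1 of these points are affinely independent (the simplex they span is nondegenerate). -/
/-!
Scaled by `k`, the lifted points `(1, k • p_i)` are the rows of the integer matrix
`(i ^ m % k)_{i, m}`, whose reduction mod `k` is the Vandermonde matrix of distinct elements of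
`ZMod k`. Its determinant is therefore nonzero mod `k`, hence nonzero over `ℤ` and over `ℝ`, so the
lifted points are linearly independent and the points themselves affinely independent.
-/

open Matrix

theorem affineIndependent_of_linearIndependent_cons_one {K ι : Type*} [Ring K] {n : ℕ}
    {q : ι → Fin n → K}
    (h : LinearIndependent K fun i => (Fin.cons 1 (q i) : Fin (n + 1) → K)) :
    AffineIndependent K q := by
  rw [affineIndependent_iff]
  intro s w hw hwq
  refine linearIndependent_iff'.mp h s w (funext fun m => ?_)
  induction m using Fin.cases with
  | zero => simpa [Finset.sum_apply] using hw
  | succ m => simpa [Finset.sum_apply] using congrFun hwq m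

def powModMatrix (k : ℕ) {n : ℕ} (x : Fin n → ℕ) : Matrix (Fin n) (Fin n) ℤ :=
  Matrix.of fun j m => ((x j ^ (m : ℕ) % k : ℕ) : ℤ)

theorem powModMatrix_map_intCast (k : ℕ) {n : ℕ} (x : Fin n → ℕ) :
    (powModMatrix k x).map (Int.cast : ℤ → ZMod k) = vandermonde fun j => (x j : ZMod k) := by
  ext j m
  simp [powModMatrix]

theorem det_powModMatrix_ne_zero {k n : ℕ} (hk : k.Prime) {x : Fin n → ℕ}
    (hx : Function.Injective fun j => (x j : ZMod k)) : (powModMatrix k x).det ≠ 0 := by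
  have : Fact k.Prime := ⟨hk⟩
  intro h
  have hdet := Int.cast_det (R := ZMod k) (powModMatrix k x)
  rw [h, Int.cast_zero, powModMatrix_map_intCast] at hdet
  exact det_vandermonde_ne_zero_iff.mpr hx hdet.symm

theorem stmt_5_general (k : ℕ) (hk : k.Prime) (d : ℕ)
    (p : Fin k → Fin d → ℝ)
    (hp : ∀ i : Fin k, ∀ j : Fin d, p i j = ((i : ℕ) ^ ((j : ℕ) + 1) % k : ℕ) / (k : ℝ))
    (idx : Fin (d + 1) → Fin k) (hinj : Function.Injective idx) :
    AffineIndependent ℝ (fun j : Fin (d + 1) => p (idx j)) := by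
  have hk0 : (k : ℝ) ≠ 0 := Nat.cast_ne_zero.mpr hk.ne_zero
  set x : Fin (d + 1) → ℕ := fun j => idx j
  have hx : Function.Injective fun j => (x j : ZMod k) := fun a b hab => hinj <| Fin.ext <| by
    simpa [x, ZMod.natCast_eq_natCast_iff', Nat.mod_eq_of_lt] using hab
  have hrows : LinearIndependent ℝ fun j => (powModMatrix k x).map (Int.cast : ℤ → ℝ) j := by
    refine linearIndependent_rows_of_det_ne_zero ?_
    rw [← Int.cast_det]
    exact Int.cast_ne_zero.mpr (det_powModMatrix_ne_zero hk hx)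
  have hlift : ∀ j, (Fin.cons 1 ((k : ℝ) • p (idx j)) : Fin (d + 1) → ℝ) =
      (powModMatrix k x).map (Int.cast : ℤ → ℝ) j := by
    intro j
    funext m
    induction m using Fin.cases with
    | zero => simp only [Fin.cons_zero, map_apply, powModMatrix, of_apply, Fin.val_zero, pow_zero,
        Nat.mod_eq_of_lt hk.one_lt, Nat.cast_one, Int.cast_one]
    | succ m => simp only [Fin.cons_succ, Pi.smul_apply, smul_eq_mul, hp, mul_div_cancel₀ _ hk0,
        map_apply, powModMatrix, of_apply, Fin.val_succ, Int.cast_natCast, x]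
  rw [← affineIndependent_smul (k := ℝ) (a := Units.mk0 (k : ℝ) hk0)]
  exact affineIndependent_of_linearIndependent_cons_one (by simpa [← hlift] using hrows)

theorem stmt_5 (k : ℕ) (hk : k.Prime) (d : ℕ) (hd : 1 ≤ d)
    (p : Fin k → Fin d → ℝ)
    (hp : ∀ i : Fin k, ∀ j : Fin d, p i j = ((i : ℕ) ^ ((j : ℕ) + 1) % k : ℕ) / (k : ℝ))
    (idx : Fin (d + 1) → Fin k) (hinj : Function.Injective idx) :
    AffineIndependent ℝ (fun j : Fin (d + 1) => p (idx j)) :=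
  stmt_5_general k hk d p hp idx hinj
end

section
/- Let k be prime and define v_i = f(p_i) ∈ S^{d−1} where p_i = (1/k)·(i, i² mod k, …, i^{d−1} mod k) ∈ [0,1]^{d−1} and f(x) = (x₁−1/2, …, x_{d−1}−1/2, 1/2)/‖(x₁−1/2, …, x_{d−1}−1/2, 1/2)‖. Then for any d distinct indices i₁ < … < i_d, we have |det(v_{i₁}, …, v_{i_d})| ≥ 2^{d−1}/((d−1)!·d^{d/2}·k^{d−1}). -/
/-!
Write `u_j = (p_j - 1/2, 1/2)` for the unnormalised columns. Every entry of `u_j` lies in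
`[-1/2, 1/2]`, so `‖u_j‖ ≤ √d / 2` and normalising multiplies `|det|` by at least `(2 / √d)^d`.
Adding the last row `(1/2, …, 1/2)` to the others gives `det (u_j) = det (p_j; 1) / 2`, and clearing
the denominators `k` leaves `k^{-(d-1)}` times an integer determinant. Modulo the prime `k` that
integer matrix is the Vandermonde matrix of the distinct nodes `i_j`, up to a permutation of rows,
so its determinant is a nonzero integer.
-/

open Function Matrix

theorem Matrix.det_of_pow_perm_ne_zero {K : Type*} [Field K] {n : ℕ} {x : Fin n → K}
    (hx : Injective x) (σ : Equiv.Perm (Fin n)) :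
    (Matrix.of fun r j => x j ^ (σ r : ℕ)).det ≠ 0 := by
  have h : (Matrix.of fun r j => x j ^ (σ r : ℕ)) = (vandermonde x)ᵀ.submatrix σ id := rfl
  rw [h, det_permute, det_transpose]
  rcases Int.units_eq_one_or (Equiv.Perm.sign σ) with hσ | hσ <;>
    simp [hσ, det_vandermonde_ne_zero_iff, hx]

theorem one_le_abs_det_pow_mod {k n : ℕ} (hk : k.Prime) (σ : Equiv.Perm (Fin n))
    {x : Fin n → Fin k} (hx : Injective x) :
    1 ≤ |(Matrix.of fun r j => (((x j : ℕ) ^ (σ r : ℕ) % k : ℕ) : ℝ)).det| := by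
  have : Fact k.Prime := ⟨hk⟩
  set N : Matrix (Fin n) (Fin n) ℤ := Matrix.of fun r j => (((x j : ℕ) ^ (σ r : ℕ) % k : ℕ) : ℤ)
  have hmod : N.map (Int.cast : ℤ → ZMod k) =
      Matrix.of fun r j => ((x j : ℕ) : ZMod k) ^ (σ r : ℕ) := by
    ext r j
    simp [N]
  have hxk : Injective fun j => ((x j : ℕ) : ZMod k) := by
    intro a b hab
    have := congrArg ZMod.val hab
    simp only [ZMod.val_cast_of_lt (x _).isLt] at this
    exact hx (Fin.ext this)
  have hN : N.det ≠ 0 := by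
    intro h0
    apply det_of_pow_perm_ne_zero hxk σ
    rw [← hmod, ← Int.cast_det, h0, Int.cast_zero]
  have hreal : (Matrix.of fun r j => (((x j : ℕ) ^ (σ r : ℕ) % k : ℕ) : ℝ)) =
      N.map (Int.cast : ℤ → ℝ) := by
    ext r j; simp only [N, map_apply, of_apply, Int.cast_natCast]
  rw [hreal, ← Int.cast_det, ← Int.cast_abs]
  exact_mod_cast Int.one_le_abs hN

theorem Matrix.abs_det_div_pow_le_abs_det_normalize {ι : Type*} [Fintype ι] [DecidableEq ι]
    (U : Matrix ι ι ℝ) {R : ℝ} (hR : 0 ≤ R) (hpos : ∀ j, 0 < ∑ r, U r j ^ 2)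
    (hle : ∀ j, ∑ r, U r j ^ 2 ≤ R ^ 2) :
    |U.det| / R ^ Fintype.card ι ≤ |(Matrix.of fun r j => U r j / √(∑ r', U r' j ^ 2)).det| := by
  set s : ι → ℝ := fun j => √(∑ r, U r j ^ 2)
  have hs : ∀ j, 0 < s j := fun j => Real.sqrt_pos.mpr (hpos j)
  have hV : (Matrix.of fun r j => U r j / s j).det = (∏ j, s j)⁻¹ * U.det := by
    rw [← Finset.prod_inv_distrib, ← det_mul_row]
    simp only [div_eq_inv_mul]
  have hnorm : ∏ j, s j ≤ R ^ Fintype.card ι := by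
    rw [← Finset.card_univ, ← Finset.prod_const]
    exact Finset.prod_le_prod (fun j _ => (hs j).le) fun j _ => Real.sqrt_le_iff.mpr ⟨hR, hle j⟩
  rw [hV, abs_mul, abs_inv, abs_of_pos (Finset.prod_pos fun j _ => hs j), inv_mul_eq_div]
  exact div_le_div_of_nonneg_left (abs_nonneg _) (Finset.prod_pos fun j _ => hs j) hnorm

/-- The paper's lifting map `f` before normalisation. -/
noncomputable def cubeLift {m : ℕ} (x : Fin m → ℝ) (j : Fin (m + 1)) : ℝ :=
  if hj : (j : ℕ) < m then x ⟨j, hj⟩ - 1 / 2 else 1 / 2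

@[simp]
theorem cubeLift_castSucc {m : ℕ} (x : Fin m → ℝ) (i : Fin m) :
    cubeLift x i.castSucc = x i - 1 / 2 := by
  simp [cubeLift]

@[simp]
theorem cubeLift_last {m : ℕ} (x : Fin m → ℝ) : cubeLift x (Fin.last m) = 1 / 2 := by
  simp [cubeLift]

theorem sum_sq_cubeLift_le {m : ℕ} {x : Fin m → ℝ} (hx : ∀ i, x i ∈ Set.Icc (0 : ℝ) 1) :
    ∑ r, cubeLift x r ^ 2 ≤ (√(m + 1) / 2) ^ 2 := by
  have hsq : ∀ r, cubeLift x r ^ 2 ≤ 1 / 4 := by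
    intro r
    induction r using Fin.lastCases with
    | last => norm_num
    | cast i =>
      obtain ⟨h0, h1⟩ := hx i
      rw [cubeLift_castSucc]
      nlinarith
  calc ∑ r, cubeLift x r ^ 2 ≤ ∑ _r : Fin (m + 1), (1 / 4 : ℝ) := Finset.sum_le_sum fun r _ => hsq r
    _ = (√(m + 1) / 2) ^ 2 := by
      rw [div_pow, Real.sq_sqrt (by positivity), Finset.sum_const, Finset.card_univ,
        Fintype.card_fin, nsmul_eq_mul]
      push_cast; ring

theorem sum_sq_cubeLift_pos {m : ℕ} (x : Fin m → ℝ) : 0 < ∑ r, cubeLift x r ^ 2 :=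
  lt_of_lt_of_le (by norm_num)
    (Finset.single_le_sum (fun r _ => sq_nonneg (cubeLift x r)) (Finset.mem_univ (Fin.last m)))

theorem det_cubeLift {m : ℕ} (x : Fin (m + 1) → Fin m → ℝ) :
    (Matrix.of fun r j => cubeLift (x j) r).det
      = (Matrix.of fun r j => Fin.snoc (α := fun _ => ℝ) (x j) 1 r).det / 2 := by
  set H : Matrix (Fin (m + 1)) (Fin (m + 1)) ℝ :=
    Matrix.of fun r j => Fin.snoc (α := fun _ => ℝ) (x j) 1 r
  set t : Fin (m + 1) → ℝ := Fin.lastCases (1 / 2) fun _ => 1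
  have ht : ∏ r, t r = 1 / 2 := by simp [t, Fin.prod_univ_castSucc]
  rw [det_eq_of_forall_row_eq_smul_add_const (B := Matrix.of fun r j => t r * H r j)
    (Fin.lastCases 0 fun _ => -1) (Fin.last m) (by simp), det_mul_column, ht, one_div_mul_eq_div]
  intro r j
  induction r using Fin.lastCases with
  | last => simp [t, H]
  | cast i => simp [t, H, sub_eq_add_neg]

noncomputable def momentPoint (k m i : ℕ) (j : Fin m) : ℝ :=
  ((i ^ ((j : ℕ) + 1) % k : ℕ) : ℝ) / k

theorem momentPoint_mem_Icc {k m : ℕ} (hk : 0 < k) (i : ℕ) (j : Fin m) :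
    momentPoint k m i j ∈ Set.Icc (0 : ℝ) 1 := by
  have hk' : (0 : ℝ) < k := by exact_mod_cast hk
  refine ⟨by unfold momentPoint; positivity, ?_⟩
  rw [momentPoint, div_le_one hk']
  exact_mod_cast (Nat.mod_lt _ hk).le

/-- Clearing the denominators `k` leaves the row of ones as the row of zeroth powers, moved to the
bottom by `finRotate`. -/
theorem det_snoc_momentPoint {k m : ℕ} (hk : 1 < k) (x : Fin (m + 1) → ℕ) :
    (Matrix.of fun r j => Fin.snoc (α := fun _ => ℝ) (momentPoint k m (x j)) 1 r).det
      = (k : ℝ)⁻¹ ^ m *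
          (Matrix.of fun r j => ((x j ^ (finRotate (m + 1) r : ℕ) % k : ℕ) : ℝ)).det := by
  set t : Fin (m + 1) → ℝ := Fin.lastCases 1 fun _ => (k : ℝ)⁻¹
  have ht : ∏ r, t r = (k : ℝ)⁻¹ ^ m := by simp [t, Fin.prod_univ_castSucc]
  rw [← ht, ← det_mul_column]
  congr 1
  ext r j
  induction r using Fin.lastCases with
  | last => simp [t, Nat.one_mod_eq_one.mpr hk.ne']
  | cast i => simp [t, momentPoint, div_eq_inv_mul]

theorem inv_pow_div_two_le_abs_det_cubeLift_momentPoint {k m : ℕ} (hk : k.Prime)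
    {x : Fin (m + 1) → Fin k} (hx : Injective x) :
    (k : ℝ)⁻¹ ^ m / 2 ≤ |(Matrix.of fun r j => cubeLift (momentPoint k m (x j)) r).det| := by
  rw [det_cubeLift, det_snoc_momentPoint hk.one_lt, abs_div, abs_mul,
    abs_of_nonneg (by positivity), abs_two]
  gcongr
  exact le_mul_of_one_le_right (by positivity) (one_le_abs_det_pow_mod hk (finRotate (m + 1)) hx)

theorem stmt_7_general (k : ℕ) (hk : k.Prime) (d : ℕ)
    (p : Fin k → Fin (d - 1) → ℝ)
    (hp : ∀ i j, p i j = ((i : ℕ) ^ ((j : ℕ) + 1) % k : ℕ) / (k : ℝ))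
    (u : Fin k → Fin d → ℝ)
    (hu : ∀ i (j : Fin d), u i j =
      if hj : (j : ℕ) < d - 1 then p i ⟨j, hj⟩ - 1 / 2 else 1 / 2)
    (v : Fin k → Fin d → ℝ)
    (hv : ∀ i j, v i j = u i j / Real.sqrt (∑ j', (u i j') ^ 2))
    (idx : Fin d → Fin k) (hinj : Function.Injective idx) :
    2 ^ (d - 1) / (Nat.factorial (d - 1) * (d : ℝ) ^ ((d : ℝ) / 2) * (k : ℝ) ^ (d - 1)) ≤
      |(Matrix.of (fun r j : Fin d => v (idx j) r)).det| := by
  obtain _ | m := d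
  · simp
  have hu' : ∀ i, u i = cubeLift (momentPoint k m i) := fun i => funext fun j => by
    rw [hu]; exact congrArg (cubeLift · j) (funext (hp i))
  set U : Matrix (Fin (m + 1)) (Fin (m + 1)) ℝ := Matrix.of fun r j => u (idx j) r
  have hV : Matrix.of (fun r j => v (idx j) r) =
      Matrix.of fun r j => U r j / √(∑ r', U r' j ^ 2) := by
    ext r j; simp [U, hv]
  have hUdet : (k : ℝ)⁻¹ ^ m / 2 ≤ |U.det| := by
    simpa [U, hu'] using inv_pow_div_two_le_abs_det_cubeLift_momentPoint hk hinj
  have hnorm := abs_det_div_pow_le_abs_det_normalize U (R := √(m + 1) / 2) (by positivity)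
    (fun j => by simpa [U, hu'] using sum_sq_cubeLift_pos (momentPoint k m (idx j)))
    (fun j => by simpa [U, hu'] using sum_sq_cubeLift_le (momentPoint_mem_Icc hk.pos (idx j)))
  have hk0 : (0 : ℝ) < k := by exact_mod_cast hk.pos
  rw [hV]
  calc 2 ^ m / (m.factorial * ((m + 1 : ℕ) : ℝ) ^ (((m + 1 : ℕ) : ℝ) / 2) * (k : ℝ) ^ m)
      ≤ 2 ^ m / (((m + 1 : ℕ) : ℝ) ^ (((m + 1 : ℕ) : ℝ) / 2) * (k : ℝ) ^ m) := by
        rw [mul_assoc]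
        exact div_le_div_of_nonneg_left (by positivity) (mul_pos (by positivity) (pow_pos hk0 m))
          (le_mul_of_one_le_left (by positivity) (by exact_mod_cast m.factorial_pos))
    _ = (k : ℝ)⁻¹ ^ m / 2 / (√(m + 1) / 2) ^ (m + 1) := by
        rw [Real.rpow_div_two_eq_sqrt _ (Nat.cast_nonneg _), Real.rpow_natCast, div_pow, inv_pow]
        push_cast
        field_simp
        ring
    _ ≤ |U.det| / (√(m + 1) / 2) ^ (m + 1) := by gcongr
    _ ≤ _ := by simpa using hnorm

theorem stmt_7 (k : ℕ) (hk : k.Prime) (d : ℕ) (hd : 2 ≤ d)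
    (p : Fin k → Fin (d - 1) → ℝ)
    (hp : ∀ i j, p i j = ((i : ℕ) ^ ((j : ℕ) + 1) % k : ℕ) / (k : ℝ))
    (u : Fin k → Fin d → ℝ)
    (hu : ∀ i (j : Fin d), u i j =
      if hj : (j : ℕ) < d - 1 then p i ⟨j, hj⟩ - 1 / 2 else 1 / 2)
    (v : Fin k → Fin d → ℝ)
    (hv : ∀ i j, v i j = u i j / Real.sqrt (∑ j', (u i j') ^ 2))
    (idx : Fin d → Fin k) (hinj : Function.Injective idx) :
    2 ^ (d - 1) / (Nat.factorial (d - 1) * (d : ℝ) ^ ((d : ℝ) / 2) * (k : ℝ) ^ (d - 1)) ≤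
      |(Matrix.of (fun r j : Fin d => v (idx j) r)).det| :=
  stmt_7_general k hk d p hp u hu v hv idx hinj
end

section
/- Any straight line that intersects the region between a strictly convex function u and a strictly concave function v (with v < u pointwise) over an interval [a, b], but avoids a closed trapezoid T lying between them, and which enters this region at some point with x-coordinate in a subinterval [a', b'] ⊆ [a,b], must intersect the region at x = a' or at x = b'. Consequence: the number of lines intersecting (τ \ T) ∩ C is at most d(a') + d(b'), where d(x) counts lines intersecting τ \ T at abscissa x. -/
/-!
On `[a, b]` the line avoids the trapezoid, so by the intermediate value theorem it stays strictly
below its floor or strictly above its ceiling throughout. In the first case it lies below `u` at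
`a'` and `b'`; were it also below `v` at both, concavity of `v` would keep it below `v` on all of
`[a', b']`, contradicting that it meets `τ` there. The second case is symmetric, with convexity
of `u`.
-/

open Set

theorem IsPreconnected.forall_lt_or_forall_gt_of_avoids_band {X : Type*} [TopologicalSpace X]
    {s : Set X} (hs : IsPreconnected s) {f g₁ g₂ : X → ℝ} (hf : ContinuousOn f s)
    (hg₁ : ContinuousOn g₁ s) (hg : ∀ x ∈ s, g₁ x ≤ g₂ x)
    (havoid : ∀ x ∈ s, f x < g₁ x ∨ g₂ x < f x) :
    (∀ x ∈ s, f x < g₁ x) ∨ (∀ x ∈ s, g₂ x < f x) := by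
  by_contra! ⟨⟨x, hx, hgfx⟩, ⟨y, hy, hfgy⟩⟩
  have hfgy : f y ≤ g₁ y := ((havoid y hy).resolve_right hfgy.not_gt).le
  obtain ⟨z, hz, hfgz⟩ := hs.intermediate_value₂ hy hx hf hg₁ hfgy hgfx
  rcases havoid z hz with h | h
  · exact h.ne hfgz
  · exact (h.trans_le (hfgz.trans_le (hg z hz))).false

theorem ConvexOn.le_left_or_le_right_of_le {E : Type*} [AddCommGroup E] [Module ℝ E]
    {s : Set E} {f g : E → ℝ} (hf : ConvexOn ℝ s f) (hg : ConcaveOn ℝ s g) {p q x : E}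
    (hp : p ∈ s) (hq : q ∈ s) (hx : x ∈ segment ℝ p q) (hgf : g x ≤ f x) :
    g p ≤ f p ∨ g q ≤ f q := by
  by_contra! ⟨hfp, hfq⟩
  have := (hf.sub hg).le_on_segment hp hq hx
  simp only [Pi.sub_apply, le_max_iff] at this
  rcases this with h | h <;> linarith

theorem line_mem_region_left_or_right {u v g₁ g₂ : ℝ → ℝ} {a b a' b' σ c x₀ : ℝ}
    (hu : ConvexOn ℝ (Icc a b) u) (hv : ConcaveOn ℝ (Icc a b) v) (hg₁ : ContinuousOn g₁ (Icc a b))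
    (hvg₁ : ∀ x ∈ Icc a b, v x ≤ g₁ x) (hg₁g₂ : ∀ x ∈ Icc a b, g₁ x ≤ g₂ x)
    (hg₂u : ∀ x ∈ Icc a b, g₂ x ≤ u x)
    (havoid : ∀ x ∈ Icc a b, σ * x + c < g₁ x ∨ g₂ x < σ * x + c)
    (haa' : a ≤ a') (hb'b : b' ≤ b) (hx₀ : x₀ ∈ Icc a' b')
    (hvx₀ : v x₀ ≤ σ * x₀ + c) (hux₀ : σ * x₀ + c ≤ u x₀) :
    (v a' ≤ σ * a' + c ∧ σ * a' + c ≤ u a') ∨ (v b' ≤ σ * b' + c ∧ σ * b' + c ≤ u b') := by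
  have ha' : a' ∈ Icc a b := ⟨haa', hx₀.1.trans (hx₀.2.trans hb'b)⟩
  have hb' : b' ∈ Icc a b := ⟨(haa'.trans hx₀.1).trans hx₀.2, hb'b⟩
  have hx₀' : x₀ ∈ segment ℝ a' b' := by rwa [segment_eq_Icc (hx₀.1.trans hx₀.2)]
  have hline_convex : ConvexOn ℝ (Icc a b) (fun x => σ * x + c) :=
    ((LinearMap.mulLeft ℝ σ).convexOn (convex_Icc a b)).add_const c
  have hline_concave : ConcaveOn ℝ (Icc a b) (fun x => σ * x + c) :=
    ((LinearMap.mulLeft ℝ σ).concaveOn (convex_Icc a b)).add_const c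
  rcases isPreconnected_Icc.forall_lt_or_forall_gt_of_avoids_band (by fun_prop) hg₁ hg₁g₂ havoid
    with hbelow | habove
  · have hu_of_mem : ∀ x ∈ Icc a b, σ * x + c ≤ u x := fun x hx =>
      ((hbelow x hx).trans_le (hg₁g₂ x hx)).le.trans (hg₂u x hx)
    rcases hline_convex.le_left_or_le_right_of_le hv ha' hb' hx₀' hvx₀ with h | h
    · exact .inl ⟨h, hu_of_mem a' ha'⟩
    · exact .inr ⟨h, hu_of_mem b' hb'⟩
  · have hv_of_mem : ∀ x ∈ Icc a b, v x ≤ σ * x + c := fun x hx =>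
      ((hvg₁ x hx).trans (hg₁g₂ x hx)).trans (habove x hx).le
    rcases hu.le_left_or_le_right_of_le hline_concave ha' hb' hx₀' hux₀ with h | h
    · exact .inl ⟨hv_of_mem a' ha', h⟩
    · exact .inr ⟨hv_of_mem b' hb', h⟩

theorem Finset.card_filter_le_card_filter_add_card_filter {α : Type*} {s : Finset α}
    {P Q R : α → Prop} [DecidablePred P] [DecidablePred Q] [DecidablePred R]
    (h : ∀ x ∈ s, P x → Q x ∨ R x) :
    (s.filter P).card ≤ (s.filter Q).card + (s.filter R).card := by
  classical
  calc (s.filter P).card ≤ (s.filter fun x => Q x ∨ R x).card :=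
        card_le_card (monotone_filter_right s h)
    _ ≤ (s.filter Q).card + (s.filter R).card := by
        rw [filter_or]; exact card_union_le _ _

open Classical in
theorem stmt_13_general (a b a' b' : ℝ) (haa' : a ≤ a') (hb'b : b' ≤ b)
    (u v : ℝ → ℝ)
    (hu : StrictConvexOn ℝ Set.univ u) (hv : StrictConcaveOn ℝ Set.univ v)
    -- the trapezoid T lies between two affine functions g₁ ≤ g₂ over [a,b],
    -- and is contained in the region τ between v and u
    (s₁ c₁ s₂ c₂ : ℝ)
    (hT₁ : ∀ x ∈ Set.Icc a b, v x ≤ s₁ * x + c₁ ∧ s₂ * x + c₂ ≤ u x)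
    (hT₂ : ∀ x ∈ Set.Icc a b, s₁ * x + c₁ ≤ s₂ * x + c₂)
    -- membership predicates for τ and T along a line y = σ x + c
    (inτ inT : ℝ → ℝ → Prop)
    (hinτ : ∀ x y, inτ x y ↔ (a ≤ x ∧ x ≤ b ∧ v x ≤ y ∧ y ≤ u x))
    (hinT : ∀ x y, inT x y ↔ (a ≤ x ∧ x ≤ b ∧ s₁ * x + c₁ ≤ y ∧ y ≤ s₂ * x + c₂)) :
    -- main claim: a line avoiding T that meets τ \ T at some abscissa in [a', b']
    -- must meet τ \ T at a' or at b'
    (∀ σ c : ℝ,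
      (∀ x ∈ Set.Icc a b, ¬ inT x (σ * x + c)) →
      (∃ x₀ ∈ Set.Icc a' b', inτ x₀ (σ * x₀ + c)) →
      ((inτ a' (σ * a' + c) ∧ ¬ inT a' (σ * a' + c)) ∨
       (inτ b' (σ * b' + c) ∧ ¬ inT b' (σ * b' + c)))) ∧
    -- consequence: the number of such lines in a finite family L is at most d(a') + d(b')
    (∀ L : Finset (ℝ × ℝ),
      (∀ p ∈ L, ∀ x ∈ Set.Icc a b, ¬ inT x (p.1 * x + p.2)) →
      (L.filter (fun p => ∃ x₀ ∈ Set.Icc a' b',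
          inτ x₀ (p.1 * x₀ + p.2) ∧ ¬ inT x₀ (p.1 * x₀ + p.2))).card ≤
        (L.filter (fun p => inτ a' (p.1 * a' + p.2) ∧ ¬ inT a' (p.1 * a' + p.2))).card +
        (L.filter (fun p => inτ b' (p.1 * b' + p.2) ∧ ¬ inT b' (p.1 * b' + p.2))).card) := by
  have key : ∀ σ c : ℝ, (∀ x ∈ Icc a b, ¬ inT x (σ * x + c)) →
      (∃ x₀ ∈ Icc a' b', inτ x₀ (σ * x₀ + c)) →
      ((inτ a' (σ * a' + c) ∧ ¬ inT a' (σ * a' + c)) ∨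
       (inτ b' (σ * b' + c) ∧ ¬ inT b' (σ * b' + c))) := by
    rintro σ c havoid ⟨x₀, hx₀, hτx₀⟩
    have hband : ∀ x ∈ Icc a b, σ * x + c < s₁ * x + c₁ ∨ s₂ * x + c₂ < σ * x + c := by
      intro x hx
      by_contra! h
      exact havoid x hx ((hinT _ _).2 ⟨hx.1, hx.2, h⟩)
    obtain ⟨-, -, hvx₀, hux₀⟩ := (hinτ _ _).1 hτx₀
    have hb' : b' ∈ Icc a b := ⟨(haa'.trans hx₀.1).trans hx₀.2, hb'b⟩
    have ha' : a' ∈ Icc a b := ⟨haa', hx₀.1.trans (hx₀.2.trans hb'b)⟩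
    rcases line_mem_region_left_or_right (hu.convexOn.subset (subset_univ _) (convex_Icc a b))
      (hv.concaveOn.subset (subset_univ _) (convex_Icc a b)) (by fun_prop) (fun x hx => (hT₁ x hx).1)
      hT₂ (fun x hx => (hT₁ x hx).2) hband haa' hb'b hx₀ hvx₀ hux₀ with h | h
    · exact .inl ⟨(hinτ _ _).2 ⟨ha'.1, ha'.2, h⟩, havoid a' ha'⟩
    · exact .inr ⟨(hinτ _ _).2 ⟨hb'.1, hb'.2, h⟩, havoid b' hb'⟩
  refine ⟨key, fun L hL => Finset.card_filter_le_card_filter_add_card_filter ?_⟩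
  rintro p hp ⟨x₀, hx₀, hτx₀, -⟩
  exact key p.1 p.2 (hL p hp) ⟨x₀, hx₀, hτx₀⟩

open Classical in
theorem stmt_13 (a b a' b' : ℝ) (haa' : a ≤ a') (ha'b' : a' < b') (hb'b : b' ≤ b)
    (u v : ℝ → ℝ)
    (hu : StrictConvexOn ℝ Set.univ u) (hv : StrictConcaveOn ℝ Set.univ v)
    (hvu : ∀ x, v x < u x)
    -- the trapezoid T lies between two affine functions g₁ ≤ g₂ over [a,b],
    -- and is contained in the region τ between v and u
    (s₁ c₁ s₂ c₂ : ℝ)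
    (hT₁ : ∀ x ∈ Set.Icc a b, v x ≤ s₁ * x + c₁ ∧ s₂ * x + c₂ ≤ u x)
    (hT₂ : ∀ x ∈ Set.Icc a b, s₁ * x + c₁ ≤ s₂ * x + c₂)
    -- membership predicates for τ and T along a line y = σ x + c
    (inτ inT : ℝ → ℝ → Prop)
    (hinτ : ∀ x y, inτ x y ↔ (a ≤ x ∧ x ≤ b ∧ v x ≤ y ∧ y ≤ u x))
    (hinT : ∀ x y, inT x y ↔ (a ≤ x ∧ x ≤ b ∧ s₁ * x + c₁ ≤ y ∧ y ≤ s₂ * x + c₂)) :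
    -- main claim: a line avoiding T that meets τ \ T at some abscissa in [a', b']
    -- must meet τ \ T at a' or at b'
    (∀ σ c : ℝ,
      (∀ x ∈ Set.Icc a b, ¬ inT x (σ * x + c)) →
      (∃ x₀ ∈ Set.Icc a' b', inτ x₀ (σ * x₀ + c)) →
      ((inτ a' (σ * a' + c) ∧ ¬ inT a' (σ * a' + c)) ∨
       (inτ b' (σ * b' + c) ∧ ¬ inT b' (σ * b' + c)))) ∧
    -- consequence: the number of such lines in a finite family L is at most d(a') + d(b')
    (∀ L : Finset (ℝ × ℝ),
      (∀ p ∈ L, ∀ x ∈ Set.Icc a b, ¬ inT x (p.1 * x + p.2)) →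
      (L.filter (fun p => ∃ x₀ ∈ Set.Icc a' b',
          inτ x₀ (p.1 * x₀ + p.2) ∧ ¬ inT x₀ (p.1 * x₀ + p.2))).card ≤
        (L.filter (fun p => inτ a' (p.1 * a' + p.2) ∧ ¬ inT a' (p.1 * a' + p.2))).card +
        (L.filter (fun p => inτ b' (p.1 * b' + p.2) ∧ ¬ inT b' (p.1 * b' + p.2))).card) :=
  stmt_13_general a b a' b' haa' hb'b u v hu hv s₁ c₁ s₂ c₂ hT₁ hT₂ inτ inT hinτ hinT
end
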